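/- arXiv:0912.5310 — 6 statements merged into one kernel-verified Lean document; each statement's English description precedes it below -/
import Mathlib

section
/- Let p be an odd prime and s : ZMod p → ℕ the canonical lift. If a, b in ZMod p satisfy a + 2b = 0 with a, b nonzero, then the minimum over nonzero x in ZMod p of s(x*a) + s(x*b) equals (p+1)/2. -/
/-! Substituting `y = x * b` turns the quantity into `s(-2y) + s(y)` over `y ≠ 0`. Since
`s(-2y) + 2 s(y)` is a positive multiple of `p`, it is at least `p`, so `2 (s(-2y) + s(y)) ≥ p`,
which for odd `p` gives the lower bound `(p + 1) / 2`. It is attained at `y = (p - 1) / 2`,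
where `-2y = 1`. -/

namespace ZMod

theorem le_val_add_two_mul_val {n : ℕ} [NeZero n] {u v : ZMod n} (h : u + 2 * v = 0)
    (hv : v ≠ 0) : n ≤ u.val + 2 * v.val := by
  have hdvd : n ∣ u.val + 2 * v.val := by
    rw [← natCast_eq_zero_iff]
    push_cast [natCast_val, cast_id]
    exact h
  have hv' : v.val ≠ 0 := (val_ne_zero v).2 hv
  exact Nat.le_of_dvd (by omega) hdvd

theorem neg_two_mul_natCast_div_two {n : ℕ} (hn : Odd n) :
    -(2 * ((n / 2 : ℕ) : ZMod n)) = 1 := by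
  have hcast : ((2 * (n / 2) + 1 : ℕ) : ZMod n) = 0 := by
    rw [Nat.two_mul_div_two_add_one_of_odd hn, natCast_self]
  push_cast at hcast
  linear_combination -hcast

end ZMod

theorem stmt_1_general (p : ℕ) (hp : p.Prime) (hodd : p ≠ 2) (a b : ZMod p)
    (hb : b ≠ 0) (hab : a + 2 * b = 0) :
    IsLeast {n : ℕ | ∃ x : ZMod p, x ≠ 0 ∧ n = (x * a).val + (x * b).val}
      ((p + 1) / 2) := by
  have : Fact p.Prime := ⟨hp⟩
  have hp_odd : Odd p := hp.odd_of_ne_two hodd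
  have hp_mod : p % 2 = 1 := Nat.odd_iff.1 hp_odd
  have ha : a = -(2 * b) := eq_neg_of_add_eq_zero_left hab
  set c : ZMod p := ((p / 2 : ℕ) : ZMod p)
  have hc_val : c.val = p / 2 := ZMod.val_natCast_of_lt (Nat.div_lt_self hp.pos one_lt_two)
  refine ⟨⟨c * b⁻¹, mul_ne_zero ?_ (inv_ne_zero hb), ?_⟩, ?_⟩
  · exact (ZMod.val_ne_zero c).1 (by have := hp.two_le; omega)
  · have hxb : c * b⁻¹ * b = c := inv_mul_cancel_right₀ hb c
    have hxa : c * b⁻¹ * a = 1 := by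
      rw [ha, show c * b⁻¹ * -(2 * b) = -(2 * c) * (b * b⁻¹) by ring, mul_inv_cancel₀ hb,
        mul_one, ZMod.neg_two_mul_natCast_div_two hp_odd]
    rw [hxa, hxb, ZMod.val_one, hc_val]
    omega
  · rintro _ ⟨x, hx, rfl⟩
    have := ZMod.le_val_add_two_mul_val (u := x * a) (v := x * b)
      (by linear_combination x * hab) (mul_ne_zero hx hb)
    omega

theorem stmt_1 (p : ℕ) (hp : p.Prime) (hodd : p ≠ 2) (a b : ZMod p)
    (ha : a ≠ 0) (hb : b ≠ 0) (hab : a + 2 * b = 0) :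
    IsLeast {n : ℕ | ∃ x : ZMod p, x ≠ 0 ∧ n = (x * a).val + (x * b).val}
      ((p + 1) / 2) :=
  stmt_1_general p hp hodd a b hb hab
end

section
/- Let p be an odd prime and s : ZMod p → ℕ the canonical lift. If a, b in ZMod p satisfy a + b ≠ 0, a + 2b ≠ 0, and 2a + b ≠ 0 (and (a,b) ≠ (0,0)), then there exists a nonzero x in ZMod p with s(x*a) + s(x*b) ≤ (p-1)/2. -/
/-!
Put `α = a / (a + b)`; the conditions on `a + 2b` and `2a + b` say `α ≠ 2` and `α ≠ -1`.
If `1 ≤ t ≤ (p - 1) / 2` satisfies `s(t α) ≤ t`, then `s(t (1 - α)) = t - s(t α)`, so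
`x = t / (a + b)` gives `s(x a) + s(x b) = t`. The involution `α ↦ 1 - α` preserves this
property and swaps the two excluded values, so we may assume `A = s(α) ≤ (p + 1) / 2`.
For `A ≤ 1` take `t = 1`, for `2A = p + 1` take `t = 2`, and otherwise `t = ⌈k p / A⌉`
with `k = ⌊(A - 1) / 2⌋` gives `0 ≤ A t - k p ≤ t`.
-/

theorem exists_mul_mod_le_of_two_mul_lt {n A : ℕ} (hn : Odd n) (hA : 3 ≤ A) (hAn : 2 * A < n) :
    ∃ t, 0 < t ∧ 2 * t < n ∧ A * t % n ≤ t := by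
  set k := (A - 1) / 2 with hk
  have hkA : 2 * k + 1 ≤ A ∧ A ≤ 2 * k + 2 := by omega
  obtain ⟨t, hkt, htk⟩ : ∃ t, k * n ≤ A * t ∧ A * t < k * n + A := by
    refine ⟨(k * n + A - 1) / A, ?_⟩
    have := Nat.div_add_mod (k * n + A - 1) A
    have := Nat.mod_lt (k * n + A - 1) (show 0 < A by omega)
    constructor <;> omega
  have hrem : A * t ≤ k * n + t := by
    rcases le_or_gt (A - 1) t with h | h
    · omega
    · -- `t ≤ A - 2 ≤ k n / A` forces `A t = k n`
      have : A * t ≤ k * n := calc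
        A * t ≤ A * (2 * k) := Nat.mul_le_mul_left A (by omega)
        _ = k * (2 * A) := by ring
        _ ≤ k * n := Nat.mul_le_mul_left k hAn.le
      omega
  have hkn : 0 < k * n := Nat.mul_pos (by omega) (by omega)
  have h2t : 2 * t ≤ n := by
    have : (A - 1) * (2 * t) ≤ (A - 1) * n := by
      zify [show 1 ≤ A by omega] at hrem hkA ⊢
      nlinarith
    exact Nat.le_of_mul_le_mul_left this (by omega)
  refine ⟨t, by nlinarith, by rcases hn with ⟨m, rfl⟩; omega, ?_⟩
  rw [show A * t = (A * t - k * n) + n * k by rw [mul_comm n k]; omega,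
    Nat.add_mul_mod_self_left, Nat.mod_eq_of_lt (by omega)]
  omega

theorem val_mul_add_val_mul_one_sub {n : ℕ} [NeZero n] {t : ℕ} (ht : t < n) {α : ZMod n}
    (h : ((t : ZMod n) * α).val ≤ t) :
    ((t : ZMod n) * α).val + ((t : ZMod n) * (1 - α)).val = t := by
  set r := ((t : ZMod n) * α).val
  have hr : (t : ZMod n) * (1 - α) = ((t - r : ℕ) : ZMod n) := by
    rw [Nat.cast_sub h, ZMod.natCast_val, ZMod.cast_id', id, mul_one_sub]
  rw [hr, ZMod.val_cast_of_lt (by omega)]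
  omega

theorem exists_val_natCast_mul_le_of_two_mul_val_le {n : ℕ} (hn : Odd n) (hn3 : 3 ≤ n)
    {α : ZMod n} (h2 : α ≠ 2) (hα : 2 * α.val ≤ n + 1) :
    ∃ t : ℕ, 0 < t ∧ 2 * t < n ∧ ((t : ZMod n) * α).val ≤ t := by
  have : NeZero n := ⟨by omega⟩
  set A := α.val
  have hαA : α = (A : ZMod n) := (ZMod.natCast_zmod_val α).symm
  have hval (t : ℕ) : ((t : ZMod n) * α).val = A * t % n := by
    rw [hαA, ← Nat.cast_mul, ZMod.val_natCast, mul_comm]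
  have hA2 : A ≠ 2 := fun h => h2 (by rw [hαA, h, Nat.cast_ofNat])
  obtain ⟨m, rfl⟩ := hn
  simp only [hval]
  rcases (show A ≤ 1 ∨ 2 * A = 2 * m + 2 ∨ (3 ≤ A ∧ 2 * A < 2 * m + 1) by omega) with
    hA | hA | hA
  · exact ⟨1, by omega, by omega, by rw [mul_one, Nat.mod_eq_of_lt (by omega)]; exact hA⟩
  · refine ⟨2, by omega, by omega, ?_⟩
    rw [show A * 2 = 1 + (2 * m + 1) * 1 by omega, Nat.add_mul_mod_self_left,
      Nat.mod_eq_of_lt (by omega)]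
    omega
  · exact exists_mul_mod_le_of_two_mul_lt ⟨m, rfl⟩ hA.1 hA.2

theorem exists_val_natCast_mul_le {n : ℕ} (hn : Odd n) (hn3 : 3 ≤ n) {α : ZMod n}
    (h2 : α ≠ 2) (hm1 : α ≠ -1) :
    ∃ t : ℕ, 0 < t ∧ 2 * t < n ∧ ((t : ZMod n) * α).val ≤ t := by
  have : NeZero n := ⟨by omega⟩
  by_cases hα : 2 * α.val ≤ n + 1
  · exact exists_val_natCast_mul_le_of_two_mul_val_le hn hn3 h2 hα
  have hval : (1 - α).val = n + 1 - α.val := by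
    have := ZMod.val_lt α
    rw [← ZMod.val_cast_of_lt (show n + 1 - α.val < n by omega)]
    congr 1
    rw [Nat.cast_sub (show α.val ≤ n + 1 by omega), Nat.cast_add, ZMod.natCast_self,
      ZMod.natCast_val, ZMod.cast_id', id, Nat.cast_one, zero_add]
  obtain ⟨t, ht0, htn, ht⟩ := exists_val_natCast_mul_le_of_two_mul_val_le hn hn3
    (α := 1 - α) (fun h => hm1 (by linear_combination -h)) (by omega)
  have := val_mul_add_val_mul_one_sub (by omega) ht
  rw [sub_sub_cancel] at this
  exact ⟨t, ht0, htn, by omega⟩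

theorem stmt_2_general (p : ℕ) (hp : p.Prime) (hodd : p ≠ 2) (a b : ZMod p)
    (h1 : a + b ≠ 0) (h2 : a + 2 * b ≠ 0) (h3 : 2 * a + b ≠ 0) :
    ∃ x : ZMod p, x ≠ 0 ∧ (x * a).val + (x * b).val ≤ (p - 1) / 2 := by
  have := Fact.mk hp
  have hα2 : a / (a + b) ≠ 2 := fun h => h2 (by rw [div_eq_iff h1] at h; linear_combination -h)
  have hαm1 : a / (a + b) ≠ -1 := fun h => h3 (by rw [div_eq_iff h1] at h; linear_combination h)
  obtain ⟨t, ht0, htp, ht⟩ :=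
    exists_val_natCast_mul_le (hp.odd_of_ne_two hodd) (by have := hp.two_le; omega) hα2 hαm1
  have htz : (t : ZMod p) ≠ 0 := by
    rw [Ne, ZMod.natCast_eq_zero_iff]
    exact fun h => by have := Nat.le_of_dvd ht0 h; omega
  refine ⟨t / (a + b), div_ne_zero htz h1, ?_⟩
  have hxa : t / (a + b) * a = t * (a / (a + b)) := by ring
  have hxb : t / (a + b) * b = t * (1 - a / (a + b)) := by field_simp; ring
  rw [hxa, hxb, val_mul_add_val_mul_one_sub (by omega) ht]
  omega

theorem stmt_2 (p : ℕ) (hp : p.Prime) (hodd : p ≠ 2) (a b : ZMod p)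
    (hab : ¬(a = 0 ∧ b = 0))
    (h1 : a + b ≠ 0) (h2 : a + 2 * b ≠ 0) (h3 : 2 * a + b ≠ 0) :
    ∃ x : ZMod p, x ≠ 0 ∧ (x * a).val + (x * b).val ≤ (p - 1) / 2 :=
  stmt_2_general p hp hodd a b h1 h2 h3
end

section
/- Let p be an odd prime and s : ZMod p → ℕ the canonical lift. Suppose a, b in ZMod p with (a+b)(a+2b)(2a+b) ≠ 0 and there exists a nonzero x with s(x*a) + s(x*b) + s(x*(a+b)) ≤ p. Then for that x, s(x*(a+b)) = s(x*a) + s(x*b) and hence s(x*a) + s(x*b) ≤ p/2, i.e. s(x*a) + s(x*b) ≤ (p-1)/2. -/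
/-- A carry would make `(u + v).val = u.val + v.val - n`, and then the bound forces
`u.val + v.val = n`, i.e. `u + v = 0`. -/
theorem ZMod.val_add_eq_of_val_add_add_le {n : ℕ} [NeZero n] {u v : ZMod n} (huv : u + v ≠ 0)
    (hle : u.val + v.val + (u + v).val ≤ n) : (u + v).val = u.val + v.val := by
  rcases lt_or_ge (u.val + v.val) n with hlt | hge
  · exact ZMod.val_add_of_lt hlt
  · have hcarry := ZMod.val_add_of_le hge
    have hne : (u + v).val ≠ 0 := (ZMod.val_ne_zero _).mpr huv
    omega

theorem stmt_5 (p : ℕ) (hp : p.Prime) (hodd : p ≠ 2) (a b : ZMod p)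
    (h : (a + b) * (a + 2 * b) * (2 * a + b) ≠ 0)
    (x : ZMod p) (hx : x ≠ 0)
    (hle : (x * a).val + (x * b).val + (x * (a + b)).val ≤ p) :
    (x * (a + b)).val = (x * a).val + (x * b).val ∧
    (x * a).val + (x * b).val ≤ (p - 1) / 2 := by
  have : Fact p.Prime := ⟨hp⟩
  have hab : a + b ≠ 0 := left_ne_zero_of_mul (left_ne_zero_of_mul h)
  have hxab : x * a + x * b ≠ 0 := by rw [← mul_add]; exact mul_ne_zero hx hab
  rw [mul_add] at hle ⊢
  have hsum := ZMod.val_add_eq_of_val_add_add_le hxab hle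
  have hpodd : p % 2 = 1 := Nat.odd_iff.mp (hp.odd_of_ne_two hodd)
  exact ⟨hsum, by omega⟩
end

section
/- Let p be a prime and let u = (0, a, b, c), v = (0, d, e, f) be vectors in (ZMod p)^4 spanning a 2-dimensional subspace P contained in the hyperplane x₁ = 0. Then there exists a nonzero w in P with s-sum at most p, where s is the canonical lift. (One may use: if a+b+c = 0 apply the 3-dimensional White lemma to u; otherwise apply it to w = (a+b+c)v - (d+e+f)u, which has coordinate sum zero.) -/
/-!
Write `S x = ∑ (x i).val`. Since `(-t).val = p - t.val` for `t ≠ 0`, we get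
`S x + S (-x) = p · #supp x`, and if the coordinates of `x` sum to `0` then `p` divides both
`S x` and `S (-x)`. With at most three nonzero coordinates the two multiples of `p` add up to at most
`3p`, so one of them is at most `p`: this is White's lemma in dimension three.

In the plane spanned by `u = (0, a, b, c)` and `v = (0, d, e, f)` a nonzero vector with coordinate
sum `0` is `u` itself if `a + b + c = 0`, and `(a + b + c) • v - (d + e + f) • u` otherwise.
-/

open Finset

namespace ZMod

variable {p : ℕ} [NeZero p] {ι : Type*} [Fintype ι]

theorem val_add_val_neg (t : ZMod p) : t.val + (-t).val = if t = 0 then 0 else p := by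
  rw [neg_val]
  split_ifs with ht
  · simp [ht]
  · have := t.val_lt
    omega

theorem sum_val_add_sum_val_neg (x : ι → ZMod p) :
    ∑ i, (x i).val + ∑ i, (-x i).val = p * #{i | x i ≠ 0} := by
  rw [← sum_add_distrib, card_filter, mul_sum]
  refine sum_congr rfl fun i _ => ?_
  rw [val_add_val_neg]
  split_ifs <;> simp_all

theorem dvd_sum_val_of_sum_eq_zero (x : ι → ZMod p) (hsum : ∑ i, x i = 0) :
    p ∣ ∑ i, (x i).val := by
  rw [← natCast_eq_zero_iff]
  push_cast [natCast_val, cast_id']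
  exact hsum

theorem sum_val_le_or_sum_val_neg_le (x : ι → ZMod p) (hsum : ∑ i, x i = 0)
    (hsupp : #{i | x i ≠ 0} ≤ 3) :
    ∑ i, (x i).val ≤ p ∨ ∑ i, (-x i).val ≤ p := by
  have htotal := sum_val_add_sum_val_neg x
  obtain ⟨k, hk⟩ := dvd_sum_val_of_sum_eq_zero x hsum
  obtain ⟨l, hl⟩ := dvd_sum_val_of_sum_eq_zero (-x) (by simp [sum_neg_distrib, hsum])
  simp only [Pi.neg_apply] at hl
  have hkl : p * (k + l) ≤ p * 3 := by
    rw [mul_add, ← hk, ← hl, htotal]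
    exact Nat.mul_le_mul_left p hsupp
  have hkl' : k + l ≤ 3 := Nat.le_of_mul_le_mul_left hkl (NeZero.pos p)
  rcases Nat.lt_or_ge k 2 with hk2 | hk2
  · exact .inl (hk ▸ (Nat.mul_le_mul_left p (by omega : k ≤ 1)).trans_eq (mul_one p))
  · exact .inr (hl ▸ (Nat.mul_le_mul_left p (by omega : l ≤ 1)).trans_eq (mul_one p))

theorem exists_mem_ne_zero_sum_val_le {S : Submodule (ZMod p) (ι → ZMod p)} {x : ι → ZMod p}
    (hxS : x ∈ S) (hx : x ≠ 0) (hsum : ∑ i, x i = 0) (hsupp : #{i | x i ≠ 0} ≤ 3) :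
    ∃ w ∈ S, w ≠ 0 ∧ ∑ i, (w i).val ≤ p := by
  rcases sum_val_le_or_sum_val_neg_le x hsum hsupp with h | h
  · exact ⟨x, hxS, hx, h⟩
  · exact ⟨-x, S.neg_mem hxS, neg_ne_zero.mpr hx, h⟩

end ZMod

theorem card_support_le_three_of_apply_zero {R : Type*} [Zero R] [DecidableEq R] (x : Fin 4 → R) (h0 : x 0 = 0) :
    #{i | x i ≠ 0} ≤ 3 := by
  calc #{i | x i ≠ 0} ≤ #(univ.erase 0) :=
        card_le_card fun i hi => mem_erase.mpr ⟨by rintro rfl; simp_all, mem_univ i⟩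
    _ = 3 := by simp

theorem linearIndependent_pair_of_finrank_span_eq_two {R M : Type*} [Ring R] [OrzechProperty R]
    [Nontrivial R] [AddCommGroup M] [Module R M] {u v : M}
    (h : Module.finrank R (Submodule.span R ({u, v} : Set M)) = 2) :
    LinearIndependent R ![u, v] := by
  rw [linearIndependent_iff_card_eq_finrank_span, Matrix.range_cons, Matrix.range_cons,
    Matrix.range_empty, Set.union_empty, Set.singleton_union]
  simpa [Set.finrank] using h.symm

theorem stmt_8 (p : ℕ) [Fact p.Prime] (a b c d e f : ZMod p)
    (u v : Fin 4 → ZMod p)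
    (hu : u = ![0, a, b, c]) (hv : v = ![0, d, e, f])
    (hdim : Module.finrank (ZMod p)
      (Submodule.span (ZMod p) ({u, v} : Set (Fin 4 → ZMod p))) = 2) :
    ∃ w ∈ Submodule.span (ZMod p) ({u, v} : Set (Fin 4 → ZMod p)),
      w ≠ 0 ∧ ∑ i, (w i).val ≤ p := by
  have hind := LinearIndependent.pair_iff.mp (linearIndependent_pair_of_finrank_span_eq_two hdim)
  have huS : u ∈ Submodule.span (ZMod p) {u, v} := Submodule.subset_span (by simp)
  have hvS : v ∈ Submodule.span (ZMod p) {u, v} := Submodule.subset_span (by simp)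
  have hsum_u : ∑ i, u i = a + b + c := by simp [hu, Fin.sum_univ_four, add_assoc]
  have hsum_v : ∑ i, v i = d + e + f := by simp [hv, Fin.sum_univ_four, add_assoc]
  by_cases habc : a + b + c = 0
  · have hu0 : u ≠ 0 := fun h => one_ne_zero (hind 1 0 (by simp [h])).1
    refine ZMod.exists_mem_ne_zero_sum_val_le huS hu0 (hsum_u.trans habc) ?_
    · exact card_support_le_three_of_apply_zero u (by simp [hu])
  · set w := (a + b + c) • v - (d + e + f) • u
    have hw0 : w ≠ 0 := fun h =>
      habc (hind (-(d + e + f)) (a + b + c) (by rw [← h]; module)).2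
    refine ZMod.exists_mem_ne_zero_sum_val_le
      (Submodule.sub_mem _ (Submodule.smul_mem _ _ hvS) (Submodule.smul_mem _ _ huS)) hw0 ?_ ?_
    · simp only [Pi.sub_apply, Pi.smul_apply, smul_eq_mul, sum_sub_distrib, ← mul_sum,
        hsum_u, hsum_v]
      ring
    · exact card_support_le_three_of_apply_zero w (by simp [w, hu, hv])
end

section
/- Let p be a prime not dividing integers a, b, and let L be the subgroup of ℚ^5 generated by ℤ^5, (1/p)(1,-1,0,0,a), and (1/p)(0,0,1,-1,b). If Q = (x₁,...,x₅) in L satisfies xᵢ ≥ 0 for all i and x₁+x₂+x₃+x₄+x₅ ≤ 1, then Q in ℤ^5. -/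
/-!
Write `Q = n + (j u + k v)/p` with `n ∈ ℤ^5`, `u = (1,-1,0,0,a)`, `v = (0,0,1,-1,b)`.
If `p ∤ j`, then `Q₁` is not an integer while `Q₁ + Q₂ = n₁ + n₂` is, so `Q₁ + Q₂ ≥ 1`.
Then `Q₃ = Q₅ = 0`, which forces `p ∣ k` and `p ∣ ja + kb`, hence `p ∣ ja`: impossible.
By symmetry also `p ∣ k`, and then every coordinate of `Q` is an integer.
-/

/-- The lattice generated by `ℤ^5`, `(1/p)(1,-1,0,0,a)` and `(1/p)(0,0,1,-1,b)`. -/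
def latticeL (p : ℕ) (a b : ℤ) : AddSubgroup (Fin 5 → ℚ) :=
  AddSubgroup.closure
    ((Set.range fun v : Fin 5 → ℤ => fun i => (v i : ℚ)) ∪
      {(![1 / p, -1 / p, 0, 0, (a : ℚ) / p] : Fin 5 → ℚ), (![0, 0, 1 / p, -1 / p, (b : ℚ) / p] : Fin 5 → ℚ)})

theorem exists_eq_intCast_add_div_of_mem_closure {ι : Type*} (p : ℕ) (u v : ι → ℤ) {Q : ι → ℚ}
    (hQ : Q ∈ AddSubgroup.closure ((Set.range fun n : ι → ℤ => fun i => (n i : ℚ)) ∪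
      {fun i => (u i : ℚ) / p, fun i => (v i : ℚ) / p})) :
    ∃ (n : ι → ℤ) (j k : ℤ), ∀ i, Q i = n i + ((j * u i + k * v i : ℤ) : ℚ) / p := by
  induction hQ using AddSubgroup.closure_induction with
  | mem x hx =>
    rcases hx with ⟨n, rfl⟩ | rfl | rfl
    · exact ⟨n, 0, 0, by simp⟩
    · exact ⟨0, 1, 0, by simp⟩
    · exact ⟨0, 0, 1, by simp⟩
  | zero => exact ⟨0, 0, 0, by simp⟩
  | add x y _ _ hx hy =>
    obtain ⟨n, j, k, hx⟩ := hx
    obtain ⟨n', j', k', hy⟩ := hy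
    exact ⟨n + n', j + j', k + k', fun i => by simp only [Pi.add_apply, hx, hy]; push_cast; ring⟩
  | neg x _ hx =>
    obtain ⟨n, j, k, hx⟩ := hx
    exact ⟨-n, -j, -k, fun i => by simp only [Pi.neg_apply, hx]; push_cast; ring⟩

theorem latticeL_eq_closure (p : ℕ) (a b : ℤ) :
    latticeL p a b = AddSubgroup.closure ((Set.range fun n : Fin 5 → ℤ => fun i => (n i : ℚ)) ∪
      {fun i => ((![1, -1, 0, 0, a] : Fin 5 → ℤ) i : ℚ) / p,
        fun i => ((![0, 0, 1, -1, b] : Fin 5 → ℤ) i : ℚ) / p}) := by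
  unfold latticeL
  congr 4 <;> funext i <;> fin_cases i <;> simp [neg_div]

theorem intCast_add_div_mem_range_iff {p : ℕ} (hp : p ≠ 0) (m c : ℤ) :
    (m : ℚ) + c / p ∈ Set.range ((↑) : ℤ → ℚ) ↔ (p : ℤ) ∣ c := by
  have hp' : (p : ℚ) ≠ 0 := by exact_mod_cast hp
  constructor
  · rintro ⟨r, hr⟩
    refine ⟨r - m, ?_⟩
    have : (c : ℚ) = p * (r - m) := by rw [hr]; field_simp; ring
    exact_mod_cast this
  · rintro ⟨d, rfl⟩
    exact ⟨m + d, by push_cast; field_simp⟩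

theorem one_le_add_of_notMem_range {x y : ℚ} (hx : 0 ≤ x) (hy : 0 ≤ y)
    (hxy : x + y ∈ Set.range ((↑) : ℤ → ℚ)) (hx' : x ∉ Set.range ((↑) : ℤ → ℚ)) :
    1 ≤ x + y := by
  obtain ⟨m, hm⟩ := hxy
  have hx0 : 0 < x := hx.lt_of_ne fun h => hx' ⟨0, by simp [h]⟩
  have hm0 : (0 : ℚ) < m := by rw [hm]; linarith
  rw [← hm]
  exact_mod_cast (show (0 : ℤ) < m by exact_mod_cast hm0)

theorem dvd_of_nonneg_of_sum_le_one {p : ℕ} (hp : Prime (p : ℤ)) {a b j k m₀ m₂ m₄ : ℤ}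
    (ha : ¬(p : ℤ) ∣ a) {x₀ x₁ y₀ y₁ z : ℚ} (hx₀ : x₀ = m₀ + j / p)
    (hx : x₀ + x₁ ∈ Set.range ((↑) : ℤ → ℚ)) (hy₀ : y₀ = m₂ + k / p)
    (hz : z = m₄ + ((j * a + k * b : ℤ) : ℚ) / p)
    (h0 : 0 ≤ x₀) (h1 : 0 ≤ x₁) (h2 : 0 ≤ y₀) (h3 : 0 ≤ y₁) (h4 : 0 ≤ z)
    (hsum : x₀ + x₁ + y₀ + y₁ + z ≤ 1) : (p : ℤ) ∣ j := by
  have hp0 : p ≠ 0 := by exact_mod_cast hp.ne_zero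
  by_contra hj
  have hx₀ : x₀ ∉ Set.range ((↑) : ℤ → ℚ) := by
    rwa [hx₀, intCast_add_div_mem_range_iff hp0]
  have hx_ge := one_le_add_of_notMem_range h0 h1 hx hx₀
  have hk : (p : ℤ) ∣ k := by
    rw [← intCast_add_div_mem_range_iff hp0 m₂, ← hy₀]
    exact ⟨0, by rw [Int.cast_zero]; linarith⟩
  have hjakb : (p : ℤ) ∣ j * a + k * b := by
    rw [← intCast_add_div_mem_range_iff hp0 m₄, ← hz]
    exact ⟨0, by rw [Int.cast_zero]; linarith⟩
  have hja : (p : ℤ) ∣ j * a := (dvd_add_left (hk.mul_right b)).mp hjakb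
  exact (hp.dvd_or_dvd hja).elim hj ha

theorem stmt_13 (p : ℕ) (hp : p.Prime) (a b : ℤ)
    (hpa : ¬(p : ℤ) ∣ a) (hpb : ¬(p : ℤ) ∣ b)
    (Q : Fin 5 → ℚ) (hQ : Q ∈ latticeL p a b)
    (hnonneg : ∀ i, 0 ≤ Q i) (hsum : ∑ i, Q i ≤ 1) :
    ∃ v : Fin 5 → ℤ, Q = fun i => (v i : ℚ) := by
  have hpZ : Prime (p : ℤ) := Nat.prime_iff_prime_int.mp hp
  rw [latticeL_eq_closure] at hQ
  obtain ⟨n, j, k, hQ⟩ := exists_eq_intCast_add_div_of_mem_closure p _ _ hQ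
  have h0 : Q 0 = n 0 + j / p := by simpa using hQ 0
  have h2 : Q 2 = n 2 + k / p := by simpa using hQ 2
  have h4 : Q 4 = n 4 + ((j * a + k * b : ℤ) : ℚ) / p := by simpa using hQ 4
  have h01 : Q 0 + Q 1 ∈ Set.range ((↑) : ℤ → ℚ) := ⟨n 0 + n 1, by simp [hQ]; ring⟩
  have h23 : Q 2 + Q 3 ∈ Set.range ((↑) : ℤ → ℚ) := ⟨n 2 + n 3, by simp [hQ]; ring⟩
  rw [Fin.sum_univ_five] at hsum
  have hj : (p : ℤ) ∣ j := dvd_of_nonneg_of_sum_le_one hpZ hpa h0 h01 h2 h4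
    (hnonneg 0) (hnonneg 1) (hnonneg 2) (hnonneg 3) (hnonneg 4) hsum
  have hk : (p : ℤ) ∣ k := dvd_of_nonneg_of_sum_le_one hpZ hpb h2 h23 h0
    (by rw [h4, add_comm (j * a)]) (hnonneg 2) (hnonneg 3) (hnonneg 0) (hnonneg 1) (hnonneg 4)
    (by linarith)
  have hint : ∀ i, Q i ∈ Set.range ((↑) : ℤ → ℚ) := fun i => by
    rw [hQ i, intCast_add_div_mem_range_iff hp.ne_zero]
    exact dvd_add (hj.mul_right _) (hk.mul_right _)
  choose v hv using hint
  exact ⟨v, funext fun i => (hv i).symm⟩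
end

section
/- Let Δ be the 4-dimensional simplex in ℝ^4 with vertices 0, e₁, e₂, e₃, and (6,14,17,65). Then Δ is an empty lattice simplex: the only points of ℤ^4 contained in Δ are its five vertices. -/
/-!
The five facet inequalities of the simplex with vertices `0, e₁, e₂, e₃, (a, b, c, n)` define a
convex set containing the vertices, hence the whole simplex. For an integer point of `Δ` they force
the last coordinate into `[0, 65]`, and for each of these 66 values they leave only the vertices.
-/

/-- Facet description of `conv {0, e₁, e₂, e₃, (a, b, c, n)}`: the barycentric coordinates of `y`,
scaled by `n`, are nonnegative. -/
def InCyclicSimplex {R : Type*} [CommRing R] [LE R] (a b c n : R) (y : Fin 4 → R) : Prop :=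
  0 ≤ y 3 ∧ a * y 3 ≤ n * y 0 ∧ b * y 3 ≤ n * y 1 ∧ c * y 3 ≤ n * y 2 ∧
    n * (y 0 + y 1 + y 2) ≤ n + (a + b + c - 1) * y 3

lemma inCyclicSimplex_intCast_iff {a b c n : ℤ} {x : Fin 4 → ℤ} :
    InCyclicSimplex (a : ℝ) b c n (fun i => (x i : ℝ)) ↔ InCyclicSimplex a b c n x := by
  simp only [InCyclicSimplex]
  norm_cast

lemma convex_setOf_inCyclicSimplex (a b c n : ℝ) :
    Convex ℝ {y : Fin 4 → ℝ | InCyclicSimplex a b c n y} := by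
  rintro u ⟨hu₁, hu₂, hu₃, hu₄, hu₅⟩ v ⟨hv₁, hv₂, hv₃, hv₄, hv₅⟩ s t hs ht hst
  obtain rfl : t = 1 - s := by linarith
  simp only [Set.mem_ofPred_eq, InCyclicSimplex, Pi.add_apply, Pi.smul_apply, smul_eq_mul]
  refine ⟨by positivity, ?_, ?_, ?_, ?_⟩
  · nlinarith [mul_le_mul_of_nonneg_left hu₂ hs, mul_le_mul_of_nonneg_left hv₂ ht]
  · nlinarith [mul_le_mul_of_nonneg_left hu₃ hs, mul_le_mul_of_nonneg_left hv₃ ht]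
  · nlinarith [mul_le_mul_of_nonneg_left hu₄ hs, mul_le_mul_of_nonneg_left hv₄ ht]
  · nlinarith [mul_le_mul_of_nonneg_left hu₅ hs, mul_le_mul_of_nonneg_left hv₅ ht]

lemma convexHull_subset_setOf_inCyclicSimplex {a b c n : ℝ} (hn : 0 ≤ n) :
    convexHull ℝ ({0, ![1,0,0,0], ![0,1,0,0], ![0,0,1,0], ![a,b,c,n]} : Set (Fin 4 → ℝ)) ⊆
      {y | InCyclicSimplex a b c n y} := by
  refine convexHull_min ?_ (convex_setOf_inCyclicSimplex a b c n)
  rintro y (rfl | rfl | rfl | rfl | rfl)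
  iterate 4 simp [InCyclicSimplex, hn]
  exact ⟨hn, (mul_comm a n).le, (mul_comm b n).le, (mul_comm c n).le,
    show n * (a + b + c) ≤ n + (a + b + c - 1) * n by linarith⟩

lemma InCyclicSimplex.mem_vertices_6_14_17_65 {x : Fin 4 → ℤ}
    (hx : InCyclicSimplex 6 14 17 65 x) :
    x ∈ ({0, ![1,0,0,0], ![0,1,0,0], ![0,0,1,0], ![6,14,17,65]} : Set (Fin 4 → ℤ)) := by
  obtain ⟨h₁, h₂, h₃, h₄, h₅⟩ := hx
  have hx₃ : x 3 ≤ 65 := by omega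
  simp only [Set.mem_insert_iff, Set.mem_singleton_iff, funext_iff, Fin.forall_fin_succ,
    IsEmpty.forall_iff, Fin.succ_zero_eq_one, Fin.succ_one_eq_two, Fin.reduceSucc, Pi.zero_apply,
    Matrix.cons_val_zero, Matrix.cons_val_succ, Matrix.cons_val_fin_one, and_true]
  interval_cases x 3 <;> omega

theorem stmt_15 :
    ∀ x : Fin 4 → ℤ,
      (fun i => (x i : ℝ)) ∈ convexHull ℝ
        ({0, ![1,0,0,0], ![0,1,0,0], ![0,0,1,0], ![6,14,17,65]} : Set (Fin 4 → ℝ)) →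
      (fun i => (x i : ℝ)) ∈
        ({0, ![1,0,0,0], ![0,1,0,0], ![0,0,1,0], ![6,14,17,65]} : Set (Fin 4 → ℝ)) := by
  intro x hx
  have hreal := convexHull_subset_setOf_inCyclicSimplex (by norm_num) hx
  have hint : InCyclicSimplex 6 14 17 65 x :=
    (inCyclicSimplex_intCast_iff (a := 6) (b := 14) (c := 17) (n := 65)).1 (by simpa using hreal)
  rcases hint.mem_vertices_6_14_17_65 with rfl | rfl | rfl | rfl | rfl
  all_goals
    simp [funext_iff, Fin.forall_fin_succ]
end
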